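/- arXiv:2509.20076 — 3 statements merged into one kernel-verified Lean document; each statement's English description precedes it below -/
import Mathlib

section
/- For all real numbers α > 0 and β with α² + (β + 7/2)² = (3/2)², one has 5(α² + β²) + 33β + 50 = −2β > 0. Consequently the BMT quadratic form of the quintic genus 2 class (1, 0, −5, 11) is strictly positive along the smallest wall W(−7/2, 3/2); equivalently, W(−7/2, 3/2) lies strictly outside the BMT semicircle α² + (β + 33/10)² = 89/100 (this is the computation behind Proposition 5.1: the Bridgeland moduli space in the chamber below the smallest wall is empty). -/
/-! On the wall `α² = (3/2)² - (β + 7/2)²`, so substituting for `α²` collapses the quadratic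
form to `-2β`, and the wall spans `β ∈ [-5, -2]`, where `-2β ≥ 4 > 0`. -/

theorem le_add_of_sq_add_sub_sq_eq {α β C R : ℝ} (hR : 0 ≤ R)
    (h : α ^ 2 + (β - C) ^ 2 = R ^ 2) : β ≤ C + R := by
  have hβ : |β - C| ≤ R := abs_le_of_sq_le_sq (by nlinarith [sq_nonneg α]) hR
  linarith [le_abs_self (β - C)]

theorem quintic_genus_two_BMT_form_eq_on_first_wall {α β : ℝ}
    (hW : α ^ 2 + (β + 7 / 2) ^ 2 = (3 / 2) ^ 2) :
    5 * (α ^ 2 + β ^ 2) + 33 * β + 50 = -2 * β := by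
  linear_combination 5 * hW

theorem le_neg_two_of_mem_first_wall {α β : ℝ}
    (hW : α ^ 2 + (β + 7 / 2) ^ 2 = (3 / 2) ^ 2) : β ≤ -2 := by
  have h := le_add_of_sq_add_sub_sq_eq (C := -7 / 2) (R := 3 / 2) (by norm_num)
    (by convert hW using 3; ring)
  linarith

theorem BMT_positive_on_first_wall_general (α β : ℝ)
    (hW : α ^ 2 + (β + 7 / 2) ^ 2 = (3 / 2) ^ 2) :
    5 * (α ^ 2 + β ^ 2) + 33 * β + 50 = -2 * β ∧ 0 < -2 * β :=
  ⟨quintic_genus_two_BMT_form_eq_on_first_wall hW,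
    by linarith [le_neg_two_of_mem_first_wall hW]⟩

/-- Along the smallest wall `W(-7/2, 3/2)`, the BMT quadratic form of the quintic
genus 2 class `(1, 0, -5, 11)` equals `-2β` and is strictly positive; hence the
wall lies strictly outside the BMT semicircle and the Bridgeland moduli space in
the chamber below the smallest wall is empty. -/
theorem BMT_positive_on_first_wall (α β : ℝ) (hα : 0 < α)
    (hW : α ^ 2 + (β + 7 / 2) ^ 2 = (3 / 2) ^ 2) :
    5 * (α ^ 2 + β ^ 2) + 33 * β + 50 = -2 * β ∧ 0 < -2 * β :=
  BMT_positive_on_first_wall_general α β hW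
end

section
/- Let a, b, c be integers with a ≥ 1 and b ∈ {1, 2}, satisfying: (i) b² − 10 ≤ a·c ≤ b²; (ii) there exists a real α > 0 with (3a − b)·α² = 3c + b; and (iii) 6b − 6ab + 9a(a − 1) + b² − c is even. Then exactly one of the following holds: (a, b, c) = (1, 1, 1); or b = 2 and c = 0 (with a ≥ 1 arbitrary); or b = 2, c = 2 and a ∈ {1, 2}; or (a, b, c) = (1, 2, 4). -/
/-!
The wall condition with `α > 0` and `3a - b > 0` forces `3c + b > 0`, hence `c ≥ 0`. Modulo 2 the
parity condition on `c₂` collapses to `c ≡ b`, and `c ≤ a c ≤ b²` leaves only finitely many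
`(a, c)` for each `b ∈ {1, 2}`.
-/

/-- Case `(a, b, c) = (1, 1, 1)`. -/
def CaseOne (a b c : ℤ) : Prop := a = 1 ∧ b = 1 ∧ c = 1

/-- Case `b = 2`, `c = 0` (with `a ≥ 1` arbitrary). -/
def CaseTwo (_a b c : ℤ) : Prop := b = 2 ∧ c = 0

/-- Case `b = 2`, `c = 2`, `a ∈ {1, 2}`. -/
def CaseThree (a b c : ℤ) : Prop := b = 2 ∧ c = 2 ∧ (a = 1 ∨ a = 2)

/-- Case `(a, b, c) = (1, 2, 4)`. -/
def CaseFour (a b c : ℤ) : Prop := a = 1 ∧ b = 2 ∧ c = 4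

theorem wall_rhs_pos {a b c : ℤ} (hab : b < 3 * a)
    (hwall : ∃ α : ℝ, 0 < α ∧
      (3 * (a : ℝ) - (b : ℝ)) * α ^ 2 = 3 * (c : ℝ) + (b : ℝ)) :
    0 < 3 * c + b := by
  obtain ⟨α, hα, heq⟩ := hwall
  have hslope : (0 : ℝ) < 3 * (a : ℝ) - (b : ℝ) := by
    rw [sub_pos]; exact_mod_cast hab
  have : (0 : ℝ) < 3 * (c : ℝ) + (b : ℝ) := heq ▸ by positivity
  exact_mod_cast this

theorem even_c₂_numerator_iff (a b c : ℤ) :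
    Even (6 * b - 6 * a * b + 9 * a * (a - 1) + b ^ 2 - c) ↔ Even (b - c) := by
  have hsplit : 6 * b - 6 * a * b + 9 * a * (a - 1) + b ^ 2 - c =
      (b - c) + (2 * (3 * b - 3 * a * b) + 9 * (a * (a - 1)) + b * (b - 1)) := by ring
  have hrest : Even (2 * (3 * b - 3 * a * b) + 9 * (a * (a - 1)) + b * (b - 1)) :=
    ((even_two_mul _).add ((Int.even_mul_pred_self a).mul_left 9)).add (Int.even_mul_pred_self b)
  rw [hsplit, Int.even_add, iff_true_right hrest]

theorem caseOne_of_b_eq_one {a c : ℤ} (ha : 1 ≤ a) (hpos : 0 < 3 * c + 1) (hac : a * c ≤ 1)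
    (hpar : Even (1 - c)) : CaseOne a 1 c := by
  have hc : 1 ≤ c := by obtain ⟨k, hk⟩ := hpar; omega
  have ha' : a = 1 := by nlinarith
  subst ha'
  exact ⟨rfl, rfl, by omega⟩

theorem caseTwo_or_caseThree_or_caseFour_of_b_eq_two {a c : ℤ} (ha : 1 ≤ a)
    (hpos : 0 < 3 * c + 2) (hac : a * c ≤ 4) (hpar : Even (2 - c)) :
    CaseTwo a 2 c ∨ CaseThree a 2 c ∨ CaseFour a 2 c := by
  obtain ⟨k, hk⟩ := hpar
  have hc : 0 ≤ c := by omega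
  have hc4 : c ≤ 4 := (le_mul_of_one_le_left hc ha).trans hac
  unfold CaseTwo CaseThree CaseFour
  interval_cases c <;> omega

theorem cases_mutually_exclusive (a b c : ℤ) :
    ¬(CaseOne a b c ∧ CaseTwo a b c) ∧ ¬(CaseOne a b c ∧ CaseThree a b c) ∧
      ¬(CaseOne a b c ∧ CaseFour a b c) ∧ ¬(CaseTwo a b c ∧ CaseThree a b c) ∧
      ¬(CaseTwo a b c ∧ CaseFour a b c) ∧ ¬(CaseThree a b c ∧ CaseFour a b c) := by
  simp only [CaseOne, CaseTwo, CaseThree, CaseFour, not_and]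
  omega

theorem wall_integer_classification_general (a b c : ℤ) (ha : 1 ≤ a) (hb : b = 1 ∨ b = 2)
    (hΔ₂ : a * c ≤ b ^ 2)
    (hwall : ∃ α : ℝ, 0 < α ∧
      (3 * (a : ℝ) - (b : ℝ)) * α ^ 2 = 3 * (c : ℝ) + (b : ℝ))
    (hc₂ : Even (6 * b - 6 * a * b + 9 * a * (a - 1) + b ^ 2 - c)) :
    (CaseOne a b c ∨ CaseTwo a b c ∨ CaseThree a b c ∨ CaseFour a b c) ∧
      ¬(CaseOne a b c ∧ CaseTwo a b c) ∧ ¬(CaseOne a b c ∧ CaseThree a b c) ∧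
      ¬(CaseOne a b c ∧ CaseFour a b c) ∧ ¬(CaseTwo a b c ∧ CaseThree a b c) ∧
      ¬(CaseTwo a b c ∧ CaseFour a b c) ∧ ¬(CaseThree a b c ∧ CaseFour a b c) := by
  have hpos := wall_rhs_pos (by omega) hwall
  have hpar := (even_c₂_numerator_iff a b c).1 hc₂
  refine ⟨?_, cases_mutually_exclusive a b c⟩
  rcases hb with rfl | rfl
  · exact Or.inl (caseOne_of_b_eq_one ha hpos (by simpa using hΔ₂) hpar)
  · exact Or.inr
      (caseTwo_or_caseThree_or_caseFour_of_b_eq_two ha hpos (by simpa using hΔ₂) hpar)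

/-- Arithmetic core of Proposition 3.1: classification of the integer solutions
`(a, b, c)` satisfying the Bogomolov inequalities, the wall condition along
`β = -3`, and the integrality of the second Chern class. Exactly one of the four
cases holds. -/
theorem wall_integer_classification (a b c : ℤ) (ha : 1 ≤ a) (hb : b = 1 ∨ b = 2)
    (hΔ₁ : b ^ 2 - 10 ≤ a * c) (hΔ₂ : a * c ≤ b ^ 2)
    (hwall : ∃ α : ℝ, 0 < α ∧
      (3 * (a : ℝ) - (b : ℝ)) * α ^ 2 = 3 * (c : ℝ) + (b : ℝ))
    (hc₂ : Even (6 * b - 6 * a * b + 9 * a * (a - 1) + b ^ 2 - c)) :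
    (CaseOne a b c ∨ CaseTwo a b c ∨ CaseThree a b c ∨ CaseFour a b c) ∧
      ¬(CaseOne a b c ∧ CaseTwo a b c) ∧ ¬(CaseOne a b c ∧ CaseThree a b c) ∧
      ¬(CaseOne a b c ∧ CaseFour a b c) ∧ ¬(CaseTwo a b c ∧ CaseThree a b c) ∧
      ¬(CaseTwo a b c ∧ CaseFour a b c) ∧ ¬(CaseThree a b c ∧ CaseFour a b c) :=
  wall_integer_classification_general a b c ha hb hΔ₂ hwall hc₂
end

section
/- Let v = (r, c, d) be a triple of real numbers with r ≠ 0 and c² − 2rd ≥ 0. Suppose (K, L, M) and (K′, L′, M′) are nonzero triples of real numbers satisfying 2Kd + Lc + Mr = 0 and 2K′d + L′c + M′r = 0, and suppose there exists a point (α₀, β₀) with α₀ > 0 such that K(α₀² + β₀²) + Lβ₀ + M = 0 and K′(α₀² + β₀²) + L′β₀ + M′ = 0. Then (K′, L′, M′) = t·(K, L, M) for some nonzero real t. Consequently, two numerical walls for a fixed class v with nonnegative discriminant that pass through a common point of the upper half-plane coincide: the numerical walls for v form two nested families of semicircles. -/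
/-!
Write `u = (2d, c, r)` and `p = (α₀² + β₀², β₀, 1)`. A wall through `(α₀, β₀)` has a coefficient
vector `(K, L, M)` orthogonal to both `u` (the linear relation) and `p` (the wall equation at the
point), so it lies on the line spanned by `u × p` as soon as `u × p ≠ 0`. If `u × p = 0`, then
`c = rβ₀` and `2d = r(α₀² + β₀²)`, which forces `c² - 2rd = -r²α₀² < 0`.
-/

open Matrix

theorem cross_cross_eq_zero_of_dotProduct_eq_zero {R : Type*} [CommRing R] {u p x : Fin 3 → R}
    (hu : x ⬝ᵥ u = 0) (hp : x ⬝ᵥ p = 0) : x ⨯₃ (u ⨯₃ p) = 0 := by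
  rw [cross_cross_eq_smul_sub_smul', dotProduct_comm u, hu, hp, zero_smul, zero_smul, sub_zero]

section OrderedField

variable {F : Type*} [Field F] [LinearOrder F] [IsStrictOrderedRing F]

theorem exists_eq_smul_of_cross_eq_zero {x n : Fin 3 → F} (hn : n ≠ 0) (h : x ⨯₃ n = 0) :
    ∃ a : F, x = a • n := by
  have hnn : n ⬝ᵥ n ≠ 0 := dotProduct_self_eq_zero.not.mpr hn
  have key : (n ⬝ᵥ n) • x = (x ⬝ᵥ n) • n := by
    rw [← sub_eq_zero, ← cross_cross_eq_smul_sub_smul', h, map_zero]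
  refine ⟨(n ⬝ᵥ n)⁻¹ * (x ⬝ᵥ n), ?_⟩
  rw [mul_smul, ← key, smul_smul, inv_mul_cancel₀ hnn, one_smul]

theorem exists_smul_eq_of_dotProduct_eq_zero {u p x y : Fin 3 → F} (hup : u ⨯₃ p ≠ 0)
    (hx : x ≠ 0) (hy : y ≠ 0) (hxu : x ⬝ᵥ u = 0) (hxp : x ⬝ᵥ p = 0)
    (hyu : y ⬝ᵥ u = 0) (hyp : y ⬝ᵥ p = 0) : ∃ t : F, t ≠ 0 ∧ y = t • x := by
  obtain ⟨a, rfl⟩ :=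
    exists_eq_smul_of_cross_eq_zero hup (cross_cross_eq_zero_of_dotProduct_eq_zero hxu hxp)
  obtain ⟨b, rfl⟩ :=
    exists_eq_smul_of_cross_eq_zero hup (cross_cross_eq_zero_of_dotProduct_eq_zero hyu hyp)
  have ha : a ≠ 0 := by rintro rfl; exact hx (zero_smul F _)
  have hb : b ≠ 0 := by rintro rfl; exact hy (zero_smul F _)
  exact ⟨b / a, div_ne_zero hb ha, by rw [smul_smul, div_mul_cancel₀ b ha]⟩

end OrderedField

theorem cross_ne_zero_of_discriminant_nonneg {r c d α β : ℝ} (hr : r ≠ 0) (hΔ : 0 ≤ c ^ 2 - 2 * r * d)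
    (hα : 0 < α) : ![2 * d, c, r] ⨯₃ ![α ^ 2 + β ^ 2, β, 1] ≠ 0 := by
  intro h
  have hc : c - r * β = 0 := by simpa [cross_apply] using congrFun h 0
  have hd : r * (α ^ 2 + β ^ 2) - 2 * d = 0 := by simpa [cross_apply] using congrFun h 1
  have hneg : c ^ 2 - 2 * r * d = -(r ^ 2 * α ^ 2) := by
    linear_combination (c + r * β) * hc + r * hd
  have : 0 < r ^ 2 * α ^ 2 := by positivity
  linarith

/-- Nested-wall property: two numerical walls for a fixed class `v = (r, c, d)`
with `r ≠ 0` and nonnegative discriminant `c² - 2rd ≥ 0` that pass through a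
common point of the upper half-plane coincide; i.e. their coefficient triples
`(K, L, M)` (satisfying the linear relation `2Kd + Lc + Mr = 0`) are
proportional. -/
theorem numerical_walls_nested (r c d : ℝ) (hr : r ≠ 0)
    (hΔ : 0 ≤ c ^ 2 - 2 * r * d)
    (K L M K' L' M' : ℝ)
    (hKLM : ¬(K = 0 ∧ L = 0 ∧ M = 0)) (hKLM' : ¬(K' = 0 ∧ L' = 0 ∧ M' = 0))
    (hrel : 2 * K * d + L * c + M * r = 0)
    (hrel' : 2 * K' * d + L' * c + M' * r = 0)
    (α₀ β₀ : ℝ) (hα₀ : 0 < α₀)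
    (hpt : K * (α₀ ^ 2 + β₀ ^ 2) + L * β₀ + M = 0)
    (hpt' : K' * (α₀ ^ 2 + β₀ ^ 2) + L' * β₀ + M' = 0) :
    ∃ t : ℝ, t ≠ 0 ∧ K' = t * K ∧ L' = t * L ∧ M' = t * M := by
  have relation (k l m : ℝ) (h : 2 * k * d + l * c + m * r = 0) :
      ![k, l, m] ⬝ᵥ ![2 * d, c, r] = 0 := by
    simp; linarith
  have through_point (k l m : ℝ) (h : k * (α₀ ^ 2 + β₀ ^ 2) + l * β₀ + m = 0) :
      ![k, l, m] ⬝ᵥ ![α₀ ^ 2 + β₀ ^ 2, β₀, 1] = 0 := by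
    simp; linarith
  obtain ⟨t, ht, h⟩ := exists_smul_eq_of_dotProduct_eq_zero (cross_ne_zero_of_discriminant_nonneg hr hΔ hα₀)
    (by simpa using hKLM) (by simpa using hKLM') (relation K L M hrel) (through_point K L M hpt)
    (relation K' L' M' hrel') (through_point K' L' M' hpt')
  exact ⟨t, ht, by simpa using h⟩
end
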